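/- With the above construction, let j ∈ {1,…,T−1}, let 1 ≤ i and let h satisfy i + 2 ≤ h ≤ T − 1, let q ∈ Q, let a_i,…,a_T ∈ Γ, and let u < B^T be a natural number all of whose base-B digits are at most (s+1)·k. Set W' = (Σ_{r=i, r≠h}^{T} g(a_r)·B^{T−r} + (f(q)·k + g(a_h))·B^{T−h})·B^{(T−j)·T} + u·B^{(T−j−1)·T}. Then c_copy(a_i, i, j) ≤ W', and c_copy(a_i, i, j) is the largest coin in 𝒞 not exceeding W'; hence it is the coin selected by the greedy procedure at remaining amount W'. -/

import Mathlib

/-!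
Write `N = B ^ T`. The remaining amount is `S * B ^ ((T - j) * T) + u * B ^ ((T - j - 1) * T)`
with `S, u < N`, and every coin has the shape `P * B ^ ((T - j') * T) - Q * B ^ ((T - j' - 1) * T)`
with `P, Q < N`. A coin of an earlier level `j' < j` exceeds the amount, a coin of a later level
`j' > j` is below `c_copy(a_i, i, j)`, and a coin of level `j` fits only if `P ≤ S + 1`.
It remains to compare `P` with the leading base-`B` digits of `S`: copy coins are ordered by their
leading digit, and a transition or left-end coin reaching the leading digit of `S` carries a state
digit at cell `i` or `i + 1`, where `S` holds a plain tape symbol because the head sits at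
`h ≥ i + 2`.
-/

/-- A deterministic single-tape Turing machine with a left endmarker `dollar` and a
blank symbol `blank`.  In the transition function, the direction `true` means the head
moves one cell to the right and `false` means one cell to the left. -/
structure TM (Q Γ : Type*) where
  δ : Q → Γ → Q × Γ × Bool
  q₀ : Q
  qacc : Q
  qrej : Q
  dollar : Γ
  blank : Γ

namespace TM

variable {Q Γ : Type*} [DecidableEq Q] [DecidableEq Γ]

/-- `q` is a halting state. -/
def Halting (M : TM Q Γ) (q : Q) : Prop := q = M.qacc ∨ q = M.qrej

instance (M : TM Q Γ) (q : Q) : Decidable (M.Halting q) := by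
  unfold Halting; infer_instance

/-- One step of the machine on a configuration `(state, head position, tape contents)`;
halting configurations are fixed points (so this computes `Δ(C)`). -/
def step (M : TM Q Γ) (c : Q × ℕ × (ℕ → Γ)) : Q × ℕ × (ℕ → Γ) :=
  if M.Halting c.1 then c
  else
    let r := M.δ c.1 (c.2.2 c.2.1)
    (r.1, if r.2.2 then c.2.1 + 1 else c.2.1 - 1, Function.update c.2.2 c.2.1 r.2.1)

/-- The initial configuration on input `x` of length `n`: state `q₀`, head on cell `1`,
the left endmarker in cell `1`, the input symbols `x 1, …, x n` in cells `2, …, n+1`,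
and blanks beyond. -/
def init (M : TM Q Γ) (x : ℕ → Γ) (n : ℕ) : Q × ℕ × (ℕ → Γ) :=
  (M.q₀, 1, fun r => if r = 1 then M.dollar else if r ≤ n + 1 then x (r - 1) else M.blank)

/-- The numeric encoding of a configuration in base `B` with `T` tape cells:
`val(C) = Σ_{r ≠ h} g(a_r)·B^(T−r) + (f(q)·k + g(a_h))·B^(T−h)`. -/
def val (f : Q → ℕ) (g : Γ → ℕ) (k B T : ℕ) (c : Q × ℕ × (ℕ → Γ)) : ℕ :=
  ∑ r ∈ Finset.Icc 1 T,
    (if r = c.2.1 then f c.1 * k + g (c.2.2 r) else g (c.2.2 r)) * B ^ (T - r)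

/-- `B^((T−j−1)·T)`, interpreted as `0` when `j = T` (or beyond). -/
def low (B T j : ℕ) : ℕ := if j < T then B ^ ((T - j - 1) * T) else 0

/-- Copy coin `c_copy(a, i, j)`. -/
def cCopy (g : Γ → ℕ) (B T : ℕ) (a : Γ) (i j : ℕ) : ℕ :=
  g a * B ^ (T - i) * B ^ ((T - j) * T) - g a * B ^ (T - i) * low B T j

/-- The higher-range part of a transition coin: digits `a⁻ (q a) a⁺` at positions
`i−1, i, i+1`. -/
def transUpper (f : Q → ℕ) (g : Γ → ℕ) (k B T : ℕ) (q : Q) (am a ap : Γ) (i : ℕ) : ℕ :=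
  g am * B ^ (T - i + 1) + (f q * k + g a) * B ^ (T - i) + g ap * B ^ (T - i - 1)

/-- The lower-range update `s'` of a transition coin. -/
def transLower (M : TM Q Γ) (f : Q → ℕ) (g : Γ → ℕ) (k B T : ℕ) (q : Q) (am a ap : Γ)
    (i : ℕ) : ℕ :=
  if M.Halting q then transUpper f g k B T q am a ap i
  else
    let r := M.δ q a
    if r.2.2 then
      g am * B ^ (T - i + 1) + g r.2.1 * B ^ (T - i) + (f r.1 * k + g ap) * B ^ (T - i - 1)
    else
      (f r.1 * k + g am) * B ^ (T - i + 1) + g r.2.1 * B ^ (T - i) + g ap * B ^ (T - i - 1)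

/-- Transition coin `c_trans(q, a⁻, a, a⁺, i, j)`. -/
def cTrans (M : TM Q Γ) (f : Q → ℕ) (g : Γ → ℕ) (k B T : ℕ) (q : Q) (am a ap : Γ)
    (i j : ℕ) : ℕ :=
  transUpper f g k B T q am a ap i * B ^ ((T - j) * T)
    - transLower M f g k B T q am a ap i * low B T j

/-- Left-end transition coin `c_left(q, a⁺, j)` (with `δ(q, $) = (q', $, R)`). -/
def cLeft (M : TM Q Γ) (f : Q → ℕ) (g : Γ → ℕ) (k B T : ℕ) (q : Q) (ap : Γ) (j : ℕ) : ℕ :=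
  ((f q * k + g M.dollar) * B ^ (T - 1) + g ap * B ^ (T - 2)) * B ^ ((T - j) * T)
    - (g M.dollar * B ^ (T - 1) + (f (M.δ q M.dollar).1 * k + g ap) * B ^ (T - 2)) * low B T j

/-- The coin set `𝒞` of the greedy coin change instance: all copy coins, transition
coins, and left-end transition coins with parameters in the prescribed ranges. -/
def coinSet (M : TM Q Γ) (f : Q → ℕ) (g : Γ → ℕ) (k B T : ℕ) : Set ℕ :=
  {c | (∃ a i j, 1 ≤ i ∧ i ≤ T ∧ 1 ≤ j ∧ j ≤ T ∧ c = cCopy g B T a i j) ∨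
       (∃ q am a ap i j, 2 ≤ i ∧ i ≤ T - 1 ∧ 1 ≤ j ∧ j ≤ T ∧
          c = cTrans M f g k B T q am a ap i j) ∨
       (∃ q ap j, ¬ M.Halting q ∧ 1 ≤ j ∧ j ≤ T ∧ c = cLeft M f g k B T q ap j)}

end TM

/-- The coin selected by the greedy procedure at remaining amount `w`: the largest coin
of `𝒞` not exceeding `w` (and `0` if no coin fits). -/
noncomputable def greedyPick (𝒞 : Set ℕ) (w : ℕ) : ℕ := sSup {c ∈ 𝒞 | c ≤ w}

/-- The remaining change amount after `t` steps of the greedy procedure starting from `W`. -/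
noncomputable def greedyRem (𝒞 : Set ℕ) (W : ℕ) : ℕ → ℕ
  | 0 => W
  | t + 1 => greedyRem 𝒞 W t - greedyPick 𝒞 (greedyRem 𝒞 W t)

open Finset

theorem mul_pow_add_lt_pow_succ {B e d r : ℕ} (hd : d < B) (hr : r < B ^ e) :
    d * B ^ e + r < B ^ (e + 1) :=
  calc d * B ^ e + r < (d + 1) * B ^ e := by rw [add_one_mul]; omega
    _ ≤ B * B ^ e := Nat.mul_le_mul_right _ hd
    _ = B ^ (e + 1) := (pow_succ' B e).symm

theorem mul_pow_lt_pow_succ {B e d : ℕ} (hd : d < B) : d * B ^ e < B ^ (e + 1) := by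
  simpa using mul_pow_add_lt_pow_succ (r := 0) hd (pow_pos (by omega) e)

theorem three_digits_lt {B p d₁ d₂ d₃ : ℕ} (h₁ : d₁ < B) (h₂ : d₂ < B)
    (h₃ : d₃ < B) :
    d₁ * B ^ (p + 2) + d₂ * B ^ (p + 1) + d₃ * B ^ p < B ^ (p + 3) := by
  rw [add_assoc]
  exact mul_pow_add_lt_pow_succ h₁ (mul_pow_add_lt_pow_succ h₂ (mul_pow_lt_pow_succ h₃))

theorem mul_pow_add_lt_mul_pow {B e d D r : ℕ} (hr : r < B ^ e) (hd : d < D) :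
    d * B ^ e + r < D * B ^ e :=
  calc d * B ^ e + r < (d + 1) * B ^ e := by rw [add_one_mul]; omega
    _ ≤ D * B ^ e := Nat.mul_le_mul_right _ hd

theorem lt_mul_pow_of_lt_pow {B n e x D : ℕ} (hB : 0 < B) (hx : x < B ^ n) (hn : n ≤ e)
    (hD : 0 < D) : x < D * B ^ e :=
  calc x < B ^ n := hx
    _ ≤ B ^ e := Nat.pow_le_pow_right hB hn
    _ ≤ D * B ^ e := Nat.le_mul_of_pos_left _ hD

theorem add_two_le_mul_pow_add {B e d D R r : ℕ} (hR : R + 2 ≤ B ^ e) (hd : D < d) :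
    D * B ^ e + R + 2 ≤ d * B ^ e + r :=
  calc D * B ^ e + R + 2 ≤ (D + 1) * B ^ e := by rw [add_one_mul]; omega
    _ ≤ d * B ^ e := Nat.mul_le_mul_right _ hd
    _ ≤ d * B ^ e + r := Nat.le_add_right _ _

theorem add_two_le_mul_pow_add_of_lt {B e p d D R r : ℕ} (hDB : D < B) (hR : R + 2 ≤ B ^ e)
    (hd : 0 < d) (hep : e < p) : D * B ^ e + R + 2 ≤ d * B ^ p + r :=
  calc D * B ^ e + R + 2 ≤ B ^ (e + 1) := mul_pow_add_lt_pow_succ (r := R + 1) hDB (by omega)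
    _ ≤ B ^ p := Nat.pow_le_pow_right (by omega) hep
    _ ≤ d * B ^ p := Nat.le_mul_of_pos_left _ hd
    _ ≤ d * B ^ p + r := Nat.le_add_right _ _

theorem add_two_le_mul_pow_add_of_le {B e p d D R r : ℕ} (hDB : D < B) (hR : R + 2 ≤ B ^ e)
    (hDd : D < d) (hep : e ≤ p) : D * B ^ e + R + 2 ≤ d * B ^ p + r := by
  rcases hep.lt_or_eq with hep | rfl
  · exact add_two_le_mul_pow_add_of_lt hDB hR (by omega) hep
  · exact add_two_le_mul_pow_add hR hDd

theorem mul_pow_lt_or_eq_or_add_two_le {B e p d D R : ℕ} (hd : 0 < d) (hdB : d < B)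
    (hD : 0 < D) (hDB : D < B) (hR : R + 2 ≤ B ^ e) :
    d * B ^ p < D * B ^ e ∨ d * B ^ p = D * B ^ e ∨ D * B ^ e + R + 2 ≤ d * B ^ p := by
  rcases lt_trichotomy p e with hp | rfl | hp
  · exact .inl (lt_mul_pow_of_lt_pow (by omega) (mul_pow_lt_pow_succ hdB) hp hD)
  · rcases lt_trichotomy d D with h | rfl | h
    · exact .inl (by simpa using mul_pow_add_lt_mul_pow (r := 0) (by omega) h)
    · exact .inr (.inl rfl)
    · exact .inr (.inr (by simpa using add_two_le_mul_pow_add (r := 0) hR h))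
  · exact .inr (.inr (by simpa using add_two_le_mul_pow_add_of_lt (r := 0) hDB hR hd hp))

theorem three_digits_lt_or_add_two_le {B e p d₁ d₂ d₃ D D' R : ℕ} (hd₁ : 0 < d₁)
    (hd₁B : d₁ < B) (hd₂B : d₂ < B) (hd₃B : d₃ < B) (hD : 0 < D) (hDB : D < B)
    (hD'B : D' < B) (hD'd₂ : D' < d₂) (hR : R + 2 ≤ B ^ e) :
    d₁ * B ^ (p + 2) + d₂ * B ^ (p + 1) + d₃ * B ^ p < D * B ^ (e + 1) ∨
      D * B ^ (e + 1) + D' * B ^ e + R + 2 ≤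
        d₁ * B ^ (p + 2) + d₂ * B ^ (p + 1) + d₃ * B ^ p := by
  have hR' : D' * B ^ e + R + 2 ≤ B ^ (e + 1) :=
    mul_pow_add_lt_pow_succ (r := R + 1) hD'B (by omega)
  rcases lt_trichotomy (p + 1) e with hp | rfl | hp
  · exact .inl
      (lt_mul_pow_of_lt_pow (by omega) (three_digits_lt hd₁B hd₂B hd₃B) (by omega) hD)
  · rw [show p + 1 + 1 = p + 2 from rfl] at hR' ⊢
    rcases lt_trichotomy d₁ D with h | rfl | h
    · left
      rw [add_assoc]
      exact mul_pow_add_lt_mul_pow (mul_pow_add_lt_pow_succ hd₂B (mul_pow_lt_pow_succ hd₃B)) h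
    · have := add_two_le_mul_pow_add (r := d₃ * B ^ p) hR hD'd₂
      omega
    · have := add_two_le_mul_pow_add (r := d₂ * B ^ (p + 1) + d₃ * B ^ p) hR' h
      omega
  · have := add_two_le_mul_pow_add_of_lt (r := d₂ * B ^ (p + 1) + d₃ * B ^ p) hDB hR' hd₁
      (show e + 1 < p + 2 by omega)
    omega

theorem sub_one_le_mul_sub_self {N P : ℕ} (hP : 0 < P) : N - 1 ≤ P * N - P := by
  rw [← Nat.mul_sub_one]
  exact Nat.le_mul_of_pos_left _ hP

theorem sub_one_le_mul_sub_of_two_le {N P Q : ℕ} (hP : 2 ≤ P) (hQ : Q < N) :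
    N - 1 ≤ P * N - Q := by
  have : 2 * N ≤ P * N := Nat.mul_le_mul_right _ hP
  omega

theorem sum_Icc_eq_add_sum_Icc_succ {M : Type*} [AddCommMonoid M] {m T : ℕ} (hm : m ≤ T)
    (F : ℕ → M) : ∑ r ∈ Icc m T, F r = F m + ∑ r ∈ Icc (m + 1) T, F r := by
  rw [Icc_eq_cons_Ioc hm, sum_cons, Icc_add_one_left_eq_Ioc]

theorem sum_Icc_mul_pow_add_two_le {B T m : ℕ} {d : ℕ → ℕ} (hd : ∀ r, d r + 2 ≤ B)
    (hm : m ≤ T) : ∑ r ∈ Icc m T, d r * B ^ (T - r) + 2 ≤ B ^ (T - m + 1) := by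
  induction hm using Nat.decreasingInduction with
  | self => simpa using hd T
  | of_succ m hm ih =>
    rw [sum_Icc_eq_add_sum_Icc_succ hm.le, show T - m = T - (m + 1) + 1 by omega]
    exact mul_pow_add_lt_pow_succ (by linarith [hd m]) ih

theorem exists_sum_Icc_eq_two_digits_add {B T i c : ℕ} {d : ℕ → ℕ}
    (hd : ∀ r, d r + 2 ≤ B) (hT : T = i + c + 2) : ∃ R, R + 2 ≤ B ^ (c + 1) ∧
      ∑ r ∈ Icc i T, d r * B ^ (T - r) = d i * B ^ (c + 2) + d (i + 1) * B ^ (c + 1) + R := by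
  subst hT
  refine ⟨∑ r ∈ Icc (i + 2) (i + c + 2), d r * B ^ (i + c + 2 - r), ?_, ?_⟩
  · simpa [show i + c + 2 - (i + 2) = c by omega] using
      sum_Icc_mul_pow_add_two_le hd (m := i + 2) (T := i + c + 2) (by omega)
  rw [sum_Icc_eq_add_sum_Icc_succ (by omega), sum_Icc_eq_add_sum_Icc_succ (by omega),
    show i + c + 2 - i = c + 2 by omega, show i + c + 2 - (i + 1) = c + 1 by omega, ← add_assoc]

namespace TM

/-- The coin that removes the block `P` from level `j` of the amount and adds the block `Q` to
level `j + 1`; copy, transition and left-end coins are all of this form by definition. -/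
def levelCoin (B T P Q j : ℕ) : ℕ := P * B ^ ((T - j) * T) - Q * low B T j

theorem pow_level_eq {B T j : ℕ} (hj : j < T) :
    B ^ ((T - j) * T) = B ^ T * B ^ ((T - j - 1) * T) := by
  rw [← pow_add]; congr 1
  obtain ⟨m, hm⟩ : ∃ m, T - j = m + 1 := ⟨T - j - 1, by omega⟩
  rw [hm, Nat.add_sub_cancel]; ring

theorem levelCoin_eq {B T P Q j : ℕ} (hj : j < T) :
    levelCoin B T P Q j = (P * B ^ T - Q) * B ^ ((T - j - 1) * T) := by
  rw [levelCoin, low, if_pos hj, pow_level_eq hj, ← mul_assoc, ← Nat.sub_mul]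

/-- `S` is the block at level `j` of the remaining amount and `P₀` the upper block of the copy
coin `c_copy(a_i, i, j)`. -/
structure BlockBounds (B T S P₀ P Q : ℕ) : Prop where
  upper_lt : P < B ^ T
  lower_lt : Q < B ^ T
  pred_le : B ^ T - 1 ≤ P * B ^ T - Q
  cmp : P < P₀ ∨ (P = P₀ ∧ Q = P₀) ∨ S + 2 ≤ P

theorem amount_lt_levelCoin_of_lt {B T S u P Q j j' : ℕ} (hB : 0 < B) (hjj : j' < j)
    (hj : j < T) (hS : S + 2 ≤ B ^ T) (hu : u < B ^ T) (hPQ : B ^ T - 1 ≤ P * B ^ T - Q) :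
    S * B ^ ((T - j) * T) + u * B ^ ((T - j - 1) * T) < levelCoin B T P Q j' := by
  rw [levelCoin_eq (hjj.trans hj), pow_level_eq hj]
  set N := B ^ T
  set Z := B ^ ((T - j - 1) * T)
  have hZ : 0 < Z := by positivity
  have hNZ : N * Z ≤ B ^ ((T - j' - 1) * T) := by
    rw [← pow_level_eq hj]
    exact Nat.pow_le_pow_right hB (Nat.mul_le_mul_right _ (by omega))
  calc S * (N * Z) + u * Z < (S + 1) * (N * Z) := by nlinarith
    _ ≤ (N - 1) * (N * Z) := by gcongr; omega
    _ ≤ (P * N - Q) * B ^ ((T - j' - 1) * T) := by gcongr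

theorem levelCoin_le_of_lt {B T P Q P₀ j j' : ℕ} (hB : 0 < B) (hjj : j < j') (hj : j < T)
    (hP : P < B ^ T) (hP₀ : 0 < P₀) : levelCoin B T P Q j' ≤ levelCoin B T P₀ P₀ j := by
  rw [levelCoin_eq hj]
  calc levelCoin B T P Q j' ≤ P * B ^ ((T - j') * T) := Nat.sub_le _ _
    _ ≤ (B ^ T - 1) * B ^ ((T - j - 1) * T) :=
      Nat.mul_le_mul (by omega) (Nat.pow_le_pow_right hB (Nat.mul_le_mul_right _ (by omega)))
    _ ≤ (P₀ * B ^ T - P₀) * B ^ ((T - j - 1) * T) := by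
      rw [← Nat.mul_sub_one]
      exact Nat.mul_le_mul_right _ (Nat.le_mul_of_pos_left _ hP₀)

theorem levelCoin_le_of_le_amount_same_level {B T S u P Q P₀ j : ℕ} (hB : 0 < B)
    (hj : j < T) (hu : u < B ^ T) (hQ : Q < B ^ T) (hP₀ : P₀ ≤ B ^ T)
    (hcmp : P < P₀ ∨ (P = P₀ ∧ Q = P₀) ∨ S + 2 ≤ P)
    (hfit : levelCoin B T P Q j ≤ S * B ^ ((T - j) * T) + u * B ^ ((T - j - 1) * T)) :
    levelCoin B T P Q j ≤ levelCoin B T P₀ P₀ j := by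
  simp only [levelCoin_eq hj] at hfit ⊢
  rw [pow_level_eq hj, ← mul_assoc, ← add_mul] at hfit
  set N := B ^ T
  -- since `u, Q < N`, a fitting coin has `P ≤ S + 1`: this is where the margin `2` comes from
  have hfit' : P * N - Q ≤ S * N + u := Nat.le_of_mul_le_mul_right hfit (by positivity)
  refine Nat.mul_le_mul_right _ ?_
  rcases hcmp with hlt | ⟨rfl, rfl⟩ | hge
  · calc P * N - Q ≤ P * N := Nat.sub_le _ _
      _ ≤ P₀ * N - N := by rw [← Nat.sub_one_mul]; gcongr; omega
      _ ≤ P₀ * N - P₀ := by omega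
  · rfl
  · have : S * N + 2 * N ≤ P * N := by rw [← add_mul]; gcongr
    omega

theorem levelCoin_le_of_le_amount {B T S u P Q P₀ j j' : ℕ} (hB : 0 < B) (hj : j < T)
    (hS : S + 2 ≤ B ^ T) (hu : u < B ^ T) (hP₀ : 0 < P₀) (hP₀N : P₀ ≤ B ^ T)
    (hblocks : BlockBounds B T S P₀ P Q)
    (hfit : levelCoin B T P Q j' ≤ S * B ^ ((T - j) * T) + u * B ^ ((T - j - 1) * T)) :
    levelCoin B T P Q j' ≤ levelCoin B T P₀ P₀ j := by
  rcases lt_trichotomy j' j with hjj | rfl | hjj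
  · exact absurd hfit (amount_lt_levelCoin_of_lt hB hjj hj hS hu hblocks.pred_le).not_ge
  · exact levelCoin_le_of_le_amount_same_level hB hj hu hblocks.lower_lt hP₀N hblocks.cmp hfit
  · exact levelCoin_le_of_lt hB hjj hj hblocks.upper_lt hP₀

section

variable {Q Γ : Type*} {f : Q → ℕ} {g : Γ → ℕ} {s k B : ℕ}

theorem symbol_add_two_le (hgr : ∀ a, 1 ≤ g a ∧ g a ≤ k) (hB : (s + 1) * k + 2 ≤ B)
    (x : Γ) : g x + 2 ≤ B := by
  nlinarith [(hgr x).2]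

theorem state_symbol_add_two_le (hfr : ∀ q, 1 ≤ f q ∧ f q ≤ s)
    (hgr : ∀ a, 1 ≤ g a ∧ g a ≤ k) (hB : (s + 1) * k + 2 ≤ B) (q : Q) (x : Γ) :
    f q * k + g x + 2 ≤ B := by
  nlinarith [(hfr q).2, (hgr x).2]

theorem lt_state_symbol (hfr : ∀ q, 1 ≤ f q ∧ f q ≤ s) (hgr : ∀ a, 1 ≤ g a ∧ g a ≤ k)
    (q : Q) (x : Γ) : k < f q * k + g x := by
  nlinarith [(hfr q).1, (hgr x).1]

theorem blockBounds_copy (hgr : ∀ a, 1 ≤ g a ∧ g a ≤ k) (hB : (s + 1) * k + 2 ≤ B)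
    {T c i' R : ℕ} (a₀ a₁ a' : Γ) (hi' : 1 ≤ i') (hi'T : i' ≤ T)
    (hR : R + 2 ≤ B ^ (c + 1)) :
    BlockBounds B T (g a₀ * B ^ (c + 2) + g a₁ * B ^ (c + 1) + R) (g a₀ * B ^ (c + 2))
      (g a' * B ^ (T - i')) (g a' * B ^ (T - i')) := by
  have hdig x : g x < B := by linarith [symbol_add_two_le hgr hB x]
  have hB0 : 0 < B := (hdig a₀).pos
  have hR' : g a₁ * B ^ (c + 1) + R + 2 ≤ B ^ (c + 2) :=
    mul_pow_add_lt_pow_succ (r := R + 1) (hdig a₁) (by omega)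
  have hP : g a' * B ^ (T - i') < B ^ T :=
    (mul_pow_lt_pow_succ (hdig a')).trans_le (Nat.pow_le_pow_right hB0 (by omega))
  refine ⟨hP, hP, sub_one_le_mul_sub_self (Nat.mul_pos (hgr a').1 (pow_pos hB0 _)), ?_⟩
  rcases mul_pow_lt_or_eq_or_add_two_le (p := T - i') (hgr a').1 (hdig a') (hgr a₀).1 (hdig a₀)
    hR' with h | h | h
  · exact .inl h
  · exact .inr (.inl ⟨h, h⟩)
  · exact .inr (.inr (by omega))

/-- The window of a transition coin reaches the leading digit of `S` only if it starts at that
cell; then its centre is a state digit, which exceeds the plain symbol `g a₁` of `S`. -/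
theorem blockBounds_trans [DecidableEq Q] (M : TM Q Γ) (hfr : ∀ q, 1 ≤ f q ∧ f q ≤ s)
    (hgr : ∀ a, 1 ≤ g a ∧ g a ≤ k) (hB : (s + 1) * k + 2 ≤ B) {T c i' R : ℕ}
    (a₀ a₁ : Γ) (q' : Q) (am a' ap : Γ) (hi' : 2 ≤ i') (hi'T : i' ≤ T - 1)
    (hR : R + 2 ≤ B ^ (c + 1)) :
    BlockBounds B T (g a₀ * B ^ (c + 2) + g a₁ * B ^ (c + 1) + R) (g a₀ * B ^ (c + 2))
      (transUpper f g k B T q' am a' ap i') (transLower M f g k B T q' am a' ap i') := by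
  have hdig x : g x < B := by linarith [symbol_add_two_le hgr hB x]
  have hsdig q x : f q * k + g x < B := by linarith [state_symbol_add_two_le hfr hgr hB q x]
  obtain ⟨p, hp⟩ : ∃ p, T - i' = p + 1 := ⟨T - i' - 1, by omega⟩
  have hpow : B ^ (p + 3) ≤ B ^ T := Nat.pow_le_pow_right (by linarith [hdig a₀]) (by omega)
  have hup : transUpper f g k B T q' am a' ap i' =
      g am * B ^ (p + 2) + (f q' * k + g a') * B ^ (p + 1) + g ap * B ^ p := by
    simp only [transUpper, hp, Nat.add_sub_cancel]
  have hlow : transLower M f g k B T q' am a' ap i' < B ^ (p + 3) := by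
    unfold transLower
    dsimp only
    split_ifs
    · exact hup ▸ three_digits_lt (hdig _) (hsdig _ _) (hdig _)
    · simpa only [hp, Nat.add_sub_cancel] using three_digits_lt (hdig _) (hdig _) (hsdig _ _)
    · simpa only [hp, Nat.add_sub_cancel] using three_digits_lt (hsdig _ _) (hdig _) (hdig _)
  have hP2 : 2 ≤ transUpper f g k B T q' am a' ap i' := by
    have : 2 ≤ g am * B ^ (p + 2) := (show 2 ≤ B by linarith [(hgr a₀).1, hdig a₀]).trans
      ((Nat.le_self_pow (by omega) B).trans (Nat.le_mul_of_pos_left _ (hgr am).1))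
    omega
  refine ⟨hup ▸ (three_digits_lt (hdig _) (hsdig _ _) (hdig _)).trans_le hpow,
    hlow.trans_le hpow, sub_one_le_mul_sub_of_two_le hP2 (hlow.trans_le hpow), ?_⟩
  rw [hup]
  rcases three_digits_lt_or_add_two_le (hgr am).1 (hdig am) (hsdig q' a') (hdig ap)
    (hgr a₀).1 (hdig a₀) (hdig a₁) ((hgr a₁).2.trans_lt (lt_state_symbol hfr hgr q' a')) hR
    with h | h
  · exact .inl h
  · exact .inr (.inr h)

theorem blockBounds_left (M : TM Q Γ) (hfr : ∀ q, 1 ≤ f q ∧ f q ≤ s)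
    (hgr : ∀ a, 1 ≤ g a ∧ g a ≤ k) (hB : (s + 1) * k + 2 ≤ B) {T c R : ℕ}
    (a₀ a₁ : Γ) (q' : Q) (ap : Γ) (hT : c + 3 ≤ T) (hR : R + 2 ≤ B ^ (c + 1)) :
    BlockBounds B T (g a₀ * B ^ (c + 2) + g a₁ * B ^ (c + 1) + R) (g a₀ * B ^ (c + 2))
      ((f q' * k + g M.dollar) * B ^ (T - 1) + g ap * B ^ (T - 2))
      (g M.dollar * B ^ (T - 1) + (f (M.δ q' M.dollar).1 * k + g ap) * B ^ (T - 2)) := by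
  have hdig x : g x < B := by linarith [symbol_add_two_le hgr hB x]
  have hsdig q x : f q * k + g x < B := by linarith [state_symbol_add_two_le hfr hgr hB q x]
  obtain ⟨p, hp1, hp2, rfl⟩ : ∃ p, T - 1 = p + 1 ∧ T - 2 = p ∧ T = p + 2 :=
    ⟨T - 2, by omega, rfl, by omega⟩
  have hR' : g a₁ * B ^ (c + 1) + R + 2 ≤ B ^ (c + 2) :=
    mul_pow_add_lt_pow_succ (r := R + 1) (hdig a₁) (by omega)
  rw [hp1, hp2]
  have hP : (f q' * k + g M.dollar) * B ^ (p + 1) + g ap * B ^ p < B ^ (p + 2) :=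
    mul_pow_add_lt_pow_succ (hsdig _ _) (mul_pow_lt_pow_succ (hdig _))
  have hP2 : 2 ≤ (f q' * k + g M.dollar) * B ^ (p + 1) + g ap * B ^ p := by
    have : 2 ≤ (f q' * k + g M.dollar) * B ^ (p + 1) :=
      (show 2 ≤ B by linarith [(hgr a₀).1, hdig a₀]).trans
        ((Nat.le_self_pow (by omega) B).trans
          (Nat.le_mul_of_pos_left _ (by have := (hgr M.dollar).1; omega)))
    omega
  have hQ : g M.dollar * B ^ (p + 1) + (f (M.δ q' M.dollar).1 * k + g ap) * B ^ p < B ^ (p + 2) :=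
    mul_pow_add_lt_pow_succ (hdig _) (mul_pow_lt_pow_succ (hsdig _ _))
  refine ⟨hP, hQ, sub_one_le_mul_sub_of_two_le hP2 hQ, .inr (.inr ?_)⟩
  have := add_two_le_mul_pow_add_of_le (r := g ap * B ^ p) (hdig a₀) hR'
    ((hgr a₀).2.trans_lt (lt_state_symbol hfr hgr q' M.dollar)) (show c + 2 ≤ p + 1 by omega)
  omega

theorem cCopy_le_amount {T i c j u R : ℕ} (a₀ a₁ : Γ) (hT : T = i + c + 2) :
    cCopy g B T a₀ i j ≤ (g a₀ * B ^ (c + 2) + g a₁ * B ^ (c + 1) + R) * B ^ ((T - j) * T)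
      + u * B ^ ((T - j - 1) * T) :=
  calc cCopy g B T a₀ i j ≤ g a₀ * B ^ (T - i) * B ^ ((T - j) * T) := Nat.sub_le _ _
    _ = g a₀ * B ^ (c + 2) * B ^ ((T - j) * T) := by rw [show T - i = c + 2 by omega]
    _ ≤ _ := le_add_right (Nat.mul_le_mul_right _ (by rw [add_assoc]; exact Nat.le_add_right _ _))

theorem le_cCopy_of_mem_coinSet [DecidableEq Q] (M : TM Q Γ) (hfr : ∀ q, 1 ≤ f q ∧ f q ≤ s)
    (hgr : ∀ a, 1 ≤ g a ∧ g a ≤ k) (hB : (s + 1) * k + 2 ≤ B) {T i c j u R x : ℕ}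
    (a₀ a₁ : Γ) (hT : T = i + c + 2) (hi : 1 ≤ i) (hj : j < T) (hu : u < B ^ T)
    (hR : R + 2 ≤ B ^ (c + 1)) (hx : x ∈ coinSet M f g k B T)
    (hfit : x ≤ (g a₀ * B ^ (c + 2) + g a₁ * B ^ (c + 1) + R) * B ^ ((T - j) * T)
      + u * B ^ ((T - j - 1) * T)) :
    x ≤ cCopy g B T a₀ i j := by
  have hdig x : g x < B := by linarith [symbol_add_two_le hgr hB x]
  have hB0 : 0 < B := (hdig a₀).pos
  have hpow : B ^ (c + 3) ≤ B ^ T := Nat.pow_le_pow_right hB0 (by omega)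
  have hS : g a₀ * B ^ (c + 2) + g a₁ * B ^ (c + 1) + R + 2 ≤ B ^ T := by
    have hR' : g a₁ * B ^ (c + 1) + R + 2 ≤ B ^ (c + 2) :=
      mul_pow_add_lt_pow_succ (r := R + 1) (hdig a₁) (by omega)
    have : g a₀ * B ^ (c + 2) + (g a₁ * B ^ (c + 1) + R + 1) < B ^ (c + 3) :=
      mul_pow_add_lt_pow_succ (hdig a₀) hR'
    omega
  obtain ⟨P, Q, j', rfl, hblocks⟩ : ∃ P Q j', x = levelCoin B T P Q j' ∧
      BlockBounds B T (g a₀ * B ^ (c + 2) + g a₁ * B ^ (c + 1) + R)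
        (g a₀ * B ^ (c + 2)) P Q := by
    rcases hx with ⟨a', i', j', hi', hi'T, -, -, rfl⟩ |
      ⟨q', am, a', ap, i', j', hi', hi'T, -, -, rfl⟩ | ⟨q', ap, j', -, -, -, rfl⟩
    · exact ⟨_, _, j', rfl, blockBounds_copy hgr hB a₀ a₁ a' hi' hi'T hR⟩
    · exact ⟨_, _, j', rfl, blockBounds_trans M hfr hgr hB a₀ a₁ q' am a' ap hi' hi'T hR⟩
    · exact ⟨_, _, j', rfl, blockBounds_left M hfr hgr hB a₀ a₁ q' ap (by omega) hR⟩
  rw [cCopy, show T - i = c + 2 by omega]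
  exact levelCoin_le_of_le_amount hB0 hj hS hu (Nat.mul_pos (hgr a₀).1 (pow_pos hB0 _))
    ((mul_pow_lt_pow_succ (hdig a₀)).trans_le hpow).le hblocks hfit

theorem isGreatest_cCopy [DecidableEq Q] (M : TM Q Γ) (hfr : ∀ q, 1 ≤ f q ∧ f q ≤ s)
    (hgr : ∀ a, 1 ≤ g a ∧ g a ≤ k) (hB : (s + 1) * k + 2 ≤ B) {T i c j u R : ℕ}
    (a₀ a₁ : Γ) (hT : T = i + c + 2) (hi : 1 ≤ i) (hj₁ : 1 ≤ j) (hj : j < T)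
    (hu : u < B ^ T) (hR : R + 2 ≤ B ^ (c + 1)) :
    IsGreatest {x | x ∈ coinSet M f g k B T ∧
        x ≤ (g a₀ * B ^ (c + 2) + g a₁ * B ^ (c + 1) + R) * B ^ ((T - j) * T)
          + u * B ^ ((T - j - 1) * T)}
      (cCopy g B T a₀ i j) :=
  ⟨⟨Or.inl ⟨a₀, i, j, hi, by omega, hj₁, hj.le, rfl⟩, cCopy_le_amount a₀ a₁ hT⟩,
    fun _ ⟨hx, hfit⟩ => le_cCopy_of_mem_coinSet M hfr hgr hB a₀ a₁ hT hi hj hu hR hx hfit⟩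

end

end TM

theorem copy_coin_is_greedy_choice_with_head_general
    {Q Γ : Type*} [DecidableEq Q]
    (M : TM Q Γ) (f : Q → ℕ) (g : Γ → ℕ) (s k B T : ℕ)
    (hfr : ∀ q, 1 ≤ f q ∧ f q ≤ s) (hgr : ∀ a, 1 ≤ g a ∧ g a ≤ k)
    (hB : (s + 1) * k + 2 ≤ B)
    (j i h : ℕ) (hj1 : 1 ≤ j) (hjT : j ≤ T - 1) (hi1 : 1 ≤ i)
    (hih : i + 2 ≤ h) (hhT : h ≤ T - 1) (q : Q)
    (a : ℕ → Γ) (u : ℕ) (hu : u < B ^ T)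
    (W' : ℕ)
    (hW' : W' = (∑ r ∈ Finset.Icc i T,
          (if r = h then f q * k + g (a r) else g (a r)) * B ^ (T - r)) * B ^ ((T - j) * T)
        + u * B ^ ((T - j - 1) * T)) :
    TM.cCopy g B T (a i) i j ≤ W' ∧
    IsGreatest {c | c ∈ TM.coinSet M f g k B T ∧ c ≤ W'} (TM.cCopy g B T (a i) i j) ∧
    greedyPick (TM.coinSet M f g k B T) W' = TM.cCopy g B T (a i) i j := by
  obtain ⟨c, hc⟩ : ∃ c, T = i + c + 2 := ⟨T - i - 2, by omega⟩
  have hd : ∀ r, (if r = h then f q * k + g (a r) else g (a r)) + 2 ≤ B := fun r => by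
    split_ifs
    exacts [TM.state_symbol_add_two_le hfr hgr hB _ _, TM.symbol_add_two_le hgr hB _]
  obtain ⟨R, hR, hS⟩ := exists_sum_Icc_eq_two_digits_add hd hc
  simp only [if_neg (show i ≠ h by omega), if_neg (show i + 1 ≠ h by omega)] at hS
  rw [hS] at hW'
  subst hW'
  have hgreatest := TM.isGreatest_cCopy M hfr hgr hB (a i) (a (i + 1)) hc hi1 hj1 (by omega) hu hR
  exact ⟨hgreatest.1.2, hgreatest, hgreatest.csSup_eq⟩

/-- Case (3) of the simulation: at a remaining amount whose higher range holds the tape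
symbols `a_i … a_T` with the state–alphabet pair at a head position `h ≥ i + 2` (so the
head is not in the neighborhood of cell `i`), and whose lower range holds a partial
update `u < B^T` all of whose base-`B` digits are at most `(s+1)·k`, the copy coin
`c_copy(a_i, i, j)` does not exceed `W'` and is the largest coin of `𝒞` not exceeding
`W'`; hence it is the coin selected by the greedy procedure. -/
theorem copy_coin_is_greedy_choice_with_head
    {Q Γ : Type*} [Fintype Q] [Fintype Γ] [DecidableEq Q] [DecidableEq Γ]
    (M : TM Q Γ) (f : Q → ℕ) (g : Γ → ℕ) (s k B T : ℕ)
    (hs : s = Fintype.card Q) (hk : k = Fintype.card Γ)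
    (hfr : ∀ q, 1 ≤ f q ∧ f q ≤ s) (hgr : ∀ a, 1 ≤ g a ∧ g a ≤ k)
    (hfi : Function.Injective f) (hgi : Function.Injective g)
    (hB : (s + 1) * k + 2 ≤ B)
    (hdollar : ∀ q, (M.δ q M.dollar).2.1 = M.dollar ∧ (M.δ q M.dollar).2.2 = true)
    (j i h : ℕ) (hj1 : 1 ≤ j) (hjT : j ≤ T - 1) (hi1 : 1 ≤ i)
    (hih : i + 2 ≤ h) (hhT : h ≤ T - 1) (q : Q)
    (a : ℕ → Γ) (u : ℕ) (hu : u < B ^ T) (hud : ∀ r, u / B ^ r % B ≤ (s + 1) * k)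
    (W' : ℕ)
    (hW' : W' = (∑ r ∈ Finset.Icc i T,
          (if r = h then f q * k + g (a r) else g (a r)) * B ^ (T - r)) * B ^ ((T - j) * T)
        + u * B ^ ((T - j - 1) * T)) :
    TM.cCopy g B T (a i) i j ≤ W' ∧
    IsGreatest {c | c ∈ TM.coinSet M f g k B T ∧ c ≤ W'} (TM.cCopy g B T (a i) i j) ∧
    greedyPick (TM.coinSet M f g k B T) W' = TM.cCopy g B T (a i) i j :=
  copy_coin_is_greedy_choice_with_head_general M f g s k B T hfr hgr hB j i h hj1 hjT hi1 hih hhT q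
    a u hu W' hW'
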